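/- For all natural numbers m and n, σ_{m,n} equals the value at x = 1 of θⁿ applied to the polynomial F_m(x) = (2/(3/2)_m)·Σ_{k=0}^{m} ((−m)_k·(1/2)_k)/(k!·(m+3/2)_k)·x^k, where θ denotes the operator x·d/dx on ℝ[x]. -/

import Mathlib

open Polynomial Finset

/-- The Pochhammer symbol (rising factorial) `(α)_k`. -/
noncomputable def poch (α : ℝ) (k : ℕ) : ℝ := ∏ i ∈ Finset.range k, (α + i)

/-- The quantity `σ_{m,n}`. -/
noncomputable def sigma (m n : ℕ) : ℝ :=
  ∑ k ∈ Finset.range (m + 1),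
    (m.choose k : ℝ) * (k : ℝ) ^ n * (-1) ^ k / poch ((k : ℝ) + 1 / 2) (m + 1)

/-- The operator `θ = x · d/dx` on `ℝ[x]`. -/
noncomputable def theta (p : Polynomial ℝ) : Polynomial ℝ := X * Polynomial.derivative p

/-!
`θ` acts diagonally on monomials, `θⁿ Xᵏ = kⁿ Xᵏ`, so the right-hand side is `Σ cₖ kⁿ` and the
identity holds term by term: `(-m)_k = (-1)ᵏ k! C(m,k)`, and both `(1/2)_k (k+1/2)_{m+1}` and
`½ (3/2)_m (m+3/2)_k` equal `(1/2)_{m+k+1}`.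
-/

lemma poch_eq_eval_ascPochhammer (α : ℝ) (k : ℕ) : poch α k = (ascPochhammer ℝ k).eval α := by
  induction k with
  | zero => simp [poch]
  | succ k ih => simp [poch, prod_range_succ, ascPochhammer_succ_right, ← ih]

lemma poch_pos {α : ℝ} (hα : 0 < α) (k : ℕ) : 0 < poch α k :=
  prod_pos fun i _ => by positivity

lemma poch_add (α : ℝ) (a b : ℕ) : poch α (a + b) = poch α a * poch (α + a) b := by
  simp only [poch, prod_range_add, Nat.cast_add, add_assoc]

lemma poch_succ (α : ℝ) (k : ℕ) : poch α (k + 1) = α * poch (α + 1) k := by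
  rw [add_comm k 1, poch_add]
  simp [poch]

lemma poch_neg_natCast (m k : ℕ) :
    poch (-(m : ℝ)) k = (-1) ^ k * (Nat.factorial k : ℝ) * m.choose k := by
  rw [poch_eq_eval_ascPochhammer, ascPochhammer_eval_neg_eq_descPochhammer,
    descPochhammer_eval_eq_descFactorial, Nat.descFactorial_eq_factorial_mul_choose]
  push_cast
  ring

lemma choose_mul_neg_one_pow_div_poch {α : ℝ} (hα : 0 < α) (m k : ℕ) :
    (m.choose k : ℝ) * (-1) ^ k / poch (k + α) (m + 1) =
      poch (-(m : ℝ)) k * poch α k / ((Nat.factorial k : ℝ) * poch (m + α + 1) k) /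
        (α * poch (α + 1) m) := by
  have hprod : poch α k * poch (k + α) (m + 1) = α * poch (α + 1) m * poch (m + α + 1) k := by
    rw [← poch_succ, add_comm (k : ℝ), ← poch_add, add_comm k, poch_add]
    push_cast
    ring_nf
  have := poch_pos hα k
  have := poch_pos (by positivity : (0 : ℝ) < k + α) (m + 1)
  have := poch_pos (by positivity : (0 : ℝ) < α + 1) m
  have := poch_pos (by positivity : (0 : ℝ) < m + α + 1) k
  rw [poch_neg_natCast]
  field_simp
  linear_combination (m.choose k : ℝ) * hprod.symm

noncomputable def thetaLinearMap : Module.End ℝ ℝ[X] := LinearMap.mulLeft ℝ X ∘ₗ derivative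

lemma coe_thetaLinearMap_pow (n : ℕ) : ⇑(thetaLinearMap ^ n) = theta^[n] := by
  rw [Module.End.coe_pow]
  rfl

lemma theta_C_mul_X_pow (c : ℝ) (k : ℕ) : theta (C c * X ^ k) = C (c * k) * X ^ k := by
  rcases k with _ | k
  · simp [theta]
  · simp only [theta, derivative_C_mul_X_pow, map_mul, map_natCast]
    push_cast
    ring

lemma iterate_theta_C_mul_X_pow (c : ℝ) (k n : ℕ) :
    theta^[n] (C c * X ^ k) = C (c * k ^ n) * X ^ k := by
  induction n with
  | zero => simp
  | succ n ih => rw [Function.iterate_succ_apply', ih, theta_C_mul_X_pow, pow_succ, mul_assoc]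

theorem stmt3 (m n : ℕ) :
    sigma m n =
      (theta^[n]
        ((2 / poch (3 / 2) m) •
          ∑ k ∈ Finset.range (m + 1),
            Polynomial.C
              ((poch (-(m : ℝ)) k * poch (1 / 2) k) /
                ((Nat.factorial k : ℝ) * poch ((m : ℝ) + 3 / 2) k)) * X ^ k)).eval 1 := by
  rw [← coe_thetaLinearMap_pow, map_smul, map_sum]
  simp only [coe_thetaLinearMap_pow, iterate_theta_C_mul_X_pow, eval_smul, eval_finsetSum,
    eval_C_mul, eval_X_pow, one_pow, mul_one, smul_eq_mul, mul_sum, sigma]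
  refine sum_congr rfl fun k _ => ?_
  have h := choose_mul_neg_one_pow_div_poch (by norm_num : (0 : ℝ) < 1 / 2) m k
  rw [show (1 / 2 : ℝ) + 1 = 3 / 2 by norm_num, show (m : ℝ) + 1 / 2 + 1 = m + 3 / 2 by ring] at h
  rw [mul_right_comm, mul_div_right_comm, h]
  ring
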